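/- Let Λ = ⟨ρ_0,σ_0⟩,…,⟨ρ_n,σ_n⟩ be a cyclicity prefix for a rule set R, a head-choice hc, and a rule ρ ∈ R, and let K = ⟨R,D_ρ⟩. Then Λ^∞ is growing for K and hc: there is a frontier variable x of ρ with c = σ_0(x) a constant and g_Λ(c) a functional term having c as a subterm, so depth(g_Λ^k(c)) > depth(g_Λ^{k-1}(c)) for every k ≥ 1, and every g_Λ^k(c) occurs in some F_j(K,hc,Λ^∞); hence for every i there exist j > i and a term occurring in F_j(K,hc,Λ^∞) but not in F_i(K,hc,Λ^∞). -/

import Mathlib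

set_option maxHeartbeats 1000000

namespace DisjChase

open scoped Classical
noncomputable section

/-! ### Basic syntax -/

abbrev Var := ℕ
abbrev Pred := ℕ

/-- An atom over a type of terms `T`. -/
structure Atom (T : Type) where
  pred : Pred
  args : List T
deriving DecidableEq

def Atom.map {S T : Type} (f : S → T) (a : Atom S) : Atom T :=
  ⟨a.pred, a.args.map f⟩

/-- A (disjunctive existential) rule: a nonempty body and a nonempty list of
nonempty head conjunctions, all constant- and function-free (atoms over variables). -/
structure Rule where
  body : List (Atom Var)
  heads : List (List (Atom Var))
  body_ne : body ≠ []
  heads_ne : heads ≠ []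
  heads_conj_ne : ∀ h ∈ heads, h ≠ []

def Rule.branching (ρ : Rule) : ℕ := ρ.heads.length

def Rule.bodyVars (ρ : Rule) : List Var := (ρ.body.map Atom.args).flatten

/-- The frontier of a rule: the body variables that also occur in some head disjunct. -/
def Rule.frontierList (ρ : Rule) : List Var :=
  (ρ.bodyVars.filter fun x => ρ.heads.any fun h => h.any fun a => a.args.contains x).dedup

/-- A rule is datalog if it is deterministic and has no existentially quantified variables. -/
def Rule.Datalog (ρ : Rule) : Prop :=
  ρ.branching = 1 ∧ ∀ h ∈ ρ.heads, ∀ a ∈ h, ∀ x ∈ a.args, x ∈ ρ.bodyVars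

/-- A rule is deterministic if it has exactly one head disjunct. -/
def Rule.Deterministic (ρ : Rule) : Prop := ρ.branching = 1

/-- Constants: the special constant `⋆`, ordinary constants, the fresh constants
`c_f` (one for each skolem function symbol `f = f^ρ_{i,y}`), and the fresh constants
`c_x` (one for each variable `x`, used by `σ_uc`). -/
inductive Const where
  | star : Const
  | nat : ℕ → Const
  | skolemConst : Rule → ℕ → Var → Const
  | varConst : Var → Const

/-- Ground terms: built from constants and the skolem function symbols `f^ρ_{i,y}`. -/
inductive GTerm where
  | const : Const → GTerm
  | func : Rule → ℕ → Var → List GTerm → GTerm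

def GTerm.isFunctional : GTerm → Prop
  | .const _ => False
  | .func _ _ _ _ => True

/-- `GTerm.Subterm s t` : `s` is a subterm of `t`. -/
inductive GTerm.Subterm : GTerm → GTerm → Prop
  | refl (t : GTerm) : GTerm.Subterm t t
  | func {u s : GTerm} {args : List GTerm} (ρ : Rule) (i : ℕ) (y : Var) :
      s ∈ args → GTerm.Subterm u s → GTerm.Subterm u (GTerm.func ρ i y args)

def GTerm.depth : GTerm → ℕ
  | .const _ => 1
  | .func _ _ _ args => 1 + (args.attach.map fun t => GTerm.depth t.1).foldr max 0
termination_by t => sizeOf t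
decreasing_by
  have := List.sizeOf_lt_of_mem t.2
  simp only [GTerm.func.sizeOf_spec]
  omega

/-- A term is cyclic if it has a subterm of the form `f(s⃗)` with `f` occurring in `s⃗`. -/
def GTerm.Cyclic (t : GTerm) : Prop :=
  ∃ (ρ : Rule) (i : ℕ) (y : Var) (args : List GTerm),
    GTerm.Subterm (GTerm.func ρ i y args) t ∧
    ∃ s ∈ args, ∃ args' : List GTerm, GTerm.Subterm (GTerm.func ρ i y args') s

/-- A `ρ`-cyclic term: a term `f(s⃗)` with `f` a function symbol of `sk(ρ)`
occurring also in `s⃗`. -/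
def RuleCyclic (ρ : Rule) (t : GTerm) : Prop :=
  ∃ (i : ℕ) (y : Var) (args : List GTerm), t = GTerm.func ρ i y args ∧
    ∃ s ∈ args, ∃ args' : List GTerm, GTerm.Subterm (GTerm.func ρ i y args') s

/-! ### Substitutions, facts, triggers -/

abbrev Subst := Var → GTerm
abbrev Fact := Atom GTerm
abbrev FactSet := Set Fact

/-- The substitution mapping every variable `x` to the fresh constant `c_x`. -/
def sigmaUC : Subst := fun x => GTerm.const (Const.varConst x)

structure Trigger where
  rule : Rule
  subst : Subst

/-- The skolemizing substitution for disjunct `i`: body variables are mapped by `σ`,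
existential variables `y` to the skolem term `f^ρ_{i,y}` applied to the frontier images. -/
def skolemSubst (ρ : Rule) (i : ℕ) (σ : Subst) : Subst := fun y =>
  if y ∈ ρ.bodyVars then σ y
  else GTerm.func ρ i y (ρ.frontierList.map σ)

/-- `out_i(λ) = η_i(sk(ρ))σ` (0-indexed disjuncts). -/
def Trigger.out (lam : Trigger) (i : ℕ) : FactSet :=
  { f | ∃ a ∈ lam.rule.heads.getD i [], f = a.map (skolemSubst lam.rule i lam.subst) }

def Trigger.outUnion (lam : Trigger) : FactSet :=
  { f | ∃ i < lam.rule.branching, f ∈ lam.out i }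

def Trigger.Loaded (lam : Trigger) (F : FactSet) : Prop :=
  ∀ a ∈ lam.rule.body, a.map lam.subst ∈ F

def Trigger.Obsolete (lam : Trigger) (F : FactSet) : Prop :=
  ∃ h ∈ lam.rule.heads, ∃ σ' : Subst,
    (∀ x ∈ lam.rule.bodyVars, σ' x = lam.subst x) ∧ ∀ a ∈ h, a.map σ' ∈ F

/-- A fact set satisfies a rule if all triggers with this rule are not loaded or obsolete. -/
def SatisfiesRule (F : FactSet) (ρ : Rule) : Prop :=
  ∀ σ : Subst, Trigger.Loaded ⟨ρ, σ⟩ F → Trigger.Obsolete ⟨ρ, σ⟩ F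

/-- A ground term is over a rule set if all its function symbols come from
the skolemization of the rule set. -/
inductive GTerm.Over (R : Set Rule) : GTerm → Prop
  | const (c : Const) : GTerm.Over R (GTerm.const c)
  | func {ρ : Rule} {i : ℕ} {y : Var} {args : List GTerm} :
      ρ ∈ R → (∀ t ∈ args, GTerm.Over R t) → GTerm.Over R (GTerm.func ρ i y args)

def RTrigger (R : Set Rule) (lam : Trigger) : Prop :=
  lam.rule ∈ R ∧ ∀ x : Var, (lam.subst x).Over R

/-- A function-free fact set (i.e., a database). -/
def FunctionFree (F : FactSet) : Prop :=
  ∀ a ∈ F, ∀ t ∈ a.args, ∃ c : Const, t = GTerm.const c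

/-! ### Chase trees -/

/-- Iterated edge relation: paths of length `k`. -/
def EPow {V : Type} (E : V → V → Prop) : ℕ → V → V → Prop
  | 0 => Eq
  | n + 1 => fun a c => ∃ b, E a b ∧ EPow E n b c

/-- A chase tree for the knowledge base `⟨R, D⟩` (restricted chase with datalog priority). -/
structure ChaseTree (R : Set Rule) (D : FactSet) where
  V : Type
  E : V → V → Prop
  fl : V → FactSet
  tl : V → Trigger
  root : V
  reach_root : ∀ v, Relation.ReflTransGen E root v
  no_in_root : ∀ v, ¬ E v root
  parent_unique : ∀ {u w v : V}, E u v → E w v → u = w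
  root_label : fl root = D
  expand : ∀ v : V, (∃ c, E v c) →
    ∃ lam : Trigger, RTrigger R lam ∧ lam.Loaded (fl v) ∧ ¬ lam.Obsolete (fl v) ∧
      (¬ lam.rule.Datalog → ∀ ρ ∈ R, ρ.Datalog → SatisfiesRule (fl v) ρ) ∧
      ∃ f : Fin lam.rule.branching → V,
        Function.Injective f ∧ (∀ i, E v (f i)) ∧ (∀ c, E v c → ∃ i, c = f i) ∧
        ∀ i : Fin lam.rule.branching, fl (f i) = fl v ∪ lam.out i.1 ∧ tl (f i) = lam
  leaf_sat : ∀ v : V, (∀ c, ¬ E v c) → ∀ ρ ∈ R, SatisfiesRule (fl v) ρ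
  fairness : ∀ lam : Trigger, RTrigger R lam → ∀ v : V, lam.Loaded (fl v) →
    ∃ k : ℕ, ∀ u : V, EPow E k v u → lam.Obsolete (fl u)

/-- A branch of a chase tree: a maximal path starting at the root. -/
structure Branch {R : Set Rule} {D : FactSet} (T : ChaseTree R D) where
  seq : ℕ → Option T.V
  head : seq 0 = some T.root
  step_some : ∀ n v w, seq n = some v → seq (n + 1) = some w → T.E v w
  step_max : ∀ n v, seq n = some v → (∃ c, T.E v c) → ∃ w, seq (n + 1) = some w
  step_leaf : ∀ n v, seq n = some v → (∀ c, ¬ T.E v c) → seq (n + 1) = none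
  step_none : ∀ n, seq n = none → seq (n + 1) = none

/-- The result of a chase tree: the unions of the fact labels along its branches. -/
def ChaseTree.result {R : Set Rule} {D : FactSet} (T : ChaseTree R D) : Set FactSet :=
  { S | ∃ b : Branch T, S = { f | ∃ n v, b.seq n = some v ∧ f ∈ T.fl v } }

/-- A rule set never-terminates if some knowledge base with this rule set
admits no finite chase tree. -/
def NeverTerminates (R : Set Rule) : Prop :=
  ∃ D : FactSet, FunctionFree D ∧ ¬ ∃ T : ChaseTree R D, Finite T.V

/-! ### Head-choices and cyclicity sequences -/

/-- A head-choice maps every rule of `R` to one of its (1-indexed) disjuncts. -/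
def IsHeadChoice (R : Set Rule) (hc : Rule → ℕ) : Prop :=
  ∀ ρ ∈ R, 1 ≤ hc ρ ∧ hc ρ ≤ ρ.branching

def outHC (hc : Rule → ℕ) (lam : Trigger) : FactSet := lam.out (hc lam.rule - 1)

/-- `b` is the branch `branch(T,hc)` of `T`: every successive label is the parent's
label united with `out_hc` of the applied trigger. -/
def IsHcBranch {R : Set Rule} {D : FactSet} (T : ChaseTree R D) (hc : Rule → ℕ)
    (b : Branch T) : Prop :=
  ∀ n v w, b.seq n = some v → b.seq (n + 1) = some w →
    T.fl w = T.fl v ∪ outHC hc (T.tl w)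

/-- `λ` is g-unblockable for `⟨R,D⟩` and `hc`. -/
def GUnblockable (R : Set Rule) (D : FactSet) (hc : Rule → ℕ) (lam : Trigger) : Prop :=
  ∀ T : ChaseTree R D, ∀ b : Branch T, IsHcBranch T hc b →
    ∀ n v, b.seq n = some v → lam.Loaded (T.fl v) →
      ∃ m u, b.seq m = some u ∧ outHC hc lam ⊆ T.fl u

/-- `F_i(K, hc, Λ)` for a sequence `Λ` of triggers (0-indexed: `Λ k` is applied to `F_k`). -/
def chaseSeq (D : FactSet) (hc : Rule → ℕ) (Λ : ℕ → Trigger) : ℕ → FactSet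
  | 0 => D
  | n + 1 => chaseSeq D hc Λ n ∪ outHC hc (Λ n)

def SeqLoaded (D : FactSet) (hc : Rule → ℕ) (Λ : ℕ → Trigger) : Prop :=
  ∀ n, (Λ n).Loaded (chaseSeq D hc Λ n)

/-- `t` occurs in the fact set `F`. -/
def GTerm.OccursIn (t : GTerm) (F : FactSet) : Prop :=
  ∃ a ∈ F, ∃ s ∈ a.args, t.Subterm s

def SeqGrowing (D : FactSet) (hc : Rule → ℕ) (Λ : ℕ → Trigger) : Prop :=
  ∀ i, ∃ j, i < j ∧ ∃ t : GTerm,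
    t.OccursIn (chaseSeq D hc Λ j) ∧ ¬ t.OccursIn (chaseSeq D hc Λ i)

/-- A cyclicity sequence: an (infinite) sequence of `R`-triggers that is loaded,
growing, and g-unblockable. -/
def CyclicitySequence (R : Set Rule) (D : FactSet) (hc : Rule → ℕ) (Λ : ℕ → Trigger) : Prop :=
  (∀ n, RTrigger R (Λ n)) ∧ SeqLoaded D hc Λ ∧ SeqGrowing D hc Λ ∧
    ∀ n, GUnblockable R D hc (Λ n)

/-! ### Over-approximations and unblockability -/

/-- `F` is an over-approximation of `R` and `hc` before `λ`. -/
def IsOverApprox (R : Set Rule) (hc : Rule → ℕ) (lam : Trigger) (F : FactSet) : Prop :=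
  ∃ h : GTerm → GTerm,
    (∀ x ∈ lam.rule.frontierList, h (lam.subst x) = lam.subst x) ∧
    ∀ D : FactSet, FunctionFree D → ∀ T : ChaseTree R D, ∀ b : Branch T,
      IsHcBranch T hc b → ∀ n u, b.seq n = some u → ¬ outHC hc lam ⊆ T.fl u →
        (Atom.map h) '' (T.fl u) ⊆ F

/-- The substitution mapping the frontier of `ρ` (in order) to the given argument list. -/
def frontierSubst (ρ : Rule) (args : List GTerm) : Subst := fun x =>
  args.getD (ρ.frontierList.idxOf x) (GTerm.const Const.star)

/-- Birth facts of a term. -/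
def GTerm.births : GTerm → FactSet
  | .const _ => ∅
  | .func ρ i _ args =>
      Trigger.out ⟨ρ, frontierSubst ρ args⟩ i ∪
        (args.attach.map fun s => GTerm.births s.1).foldr (· ∪ ·) ∅
termination_by t => sizeOf t
decreasing_by
  have := List.sizeOf_lt_of_mem s.2
  simp only [GTerm.func.sizeOf_spec]
  omega

/-- Birth facts of a trigger. -/
def Trigger.births (lam : Trigger) : FactSet :=
  { f | ∃ x ∈ lam.rule.frontierList, f ∈ GTerm.births (lam.subst x) }

/-- The term-skeleton of a trigger: the terms occurring in its birth facts together
with the constants in frontier positions. -/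
def skel (lam : Trigger) : Set GTerm :=
  { t | ∃ a ∈ lam.births, ∃ s ∈ a.args, t.Subterm s } ∪
  { t | ∃ x ∈ lam.rule.frontierList, lam.subst x = t ∧ ∃ c, t = GTerm.const c }

/-- `h^⋆_λ`. -/
def hstar (lam : Trigger) : GTerm → GTerm := fun t =>
  if t ∈ skel lam then t else GTerm.const Const.star

/-- `h^uc_λ`. -/
def huc (lam : Trigger) : GTerm → GTerm := fun t =>
  if t ∈ skel lam then t
  else
    match t with
    | GTerm.func ρ i y _ => GTerm.const (Const.skolemConst ρ i y)
    | GTerm.const (Const.skolemConst ρ i y) => GTerm.const (Const.skolemConst ρ i y)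
    | _ => GTerm.const Const.star

def hImg (h : GTerm → GTerm) (F : FactSet) : FactSet := (Atom.map h) '' F

def predsOf (R : Set Rule) : Set Pred :=
  { p | ∃ ρ ∈ R, (∃ a ∈ ρ.body, a.pred = p) ∨ ∃ h ∈ ρ.heads, ∃ a ∈ h, a.pred = p }

def skelConsts (lam : Trigger) : Set Const :=
  { c | ∃ t ∈ skel lam, GTerm.Subterm (GTerm.const c) t }

/-- All facts over a predicate of `R` and constants from `skel(λ) ∪ {⋆}`. -/
def baseFacts (R : Set Rule) (lam : Trigger) : FactSet :=
  { a | a.pred ∈ predsOf R ∧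
    ∀ t ∈ a.args, ∃ c : Const, t = GTerm.const c ∧ (c ∈ skelConsts lam ∨ c = Const.star) }

def Oclosed (R : Set Rule) (hc : Rule → ℕ) (lam : Trigger) (h : GTerm → GTerm)
    (F : FactSet) : Prop :=
  baseFacts R lam ⊆ F ∧ lam.births ⊆ F ∧
  ∀ lam' : Trigger, RTrigger R lam' → lam'.Loaded F → outHC hc lam' ≠ outHC hc lam →
    hImg h (outHC hc lam') ⊆ F

/-- `O(R, hc, λ, h)`. -/
def Oset (R : Set Rule) (hc : Rule → ℕ) (lam : Trigger) (h : GTerm → GTerm) : FactSet :=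
  ⋂₀ { F | Oclosed R hc lam h F }

def OclosedND (R : Set Rule) (lam : Trigger) (h : GTerm → GTerm) (F : FactSet) : Prop :=
  baseFacts R lam ⊆ F ∧ lam.births ⊆ F ∧
  ∀ lam' : Trigger, RTrigger R lam' → lam'.Loaded F →
    (lam'.rule = lam.rule → ∃ i < lam.rule.branching, lam'.out i ≠ lam.out i) →
    hImg h lam'.outUnion ⊆ F

/-- `O(R, λ, h)`. -/
def OsetND (R : Set Rule) (lam : Trigger) (h : GTerm → GTerm) : FactSet :=
  ⋂₀ { F | OclosedND R lam h F }

/-- `λ` is `⋆`-unblockable for `R`. -/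
def StarUnblockable (R : Set Rule) (lam : Trigger) : Prop :=
  lam.rule.Datalog ∨ ¬ lam.Obsolete (OsetND R lam (hstar lam))

/-- `λ` is `uc`-unblockable for `R` and `hc`. -/
def UcUnblockable (R : Set Rule) (hc : Rule → ℕ) (lam : Trigger) : Prop :=
  lam.rule.Datalog ∨ ¬ lam.Obsolete (Oset R hc lam (huc lam))

/-! ### Constant mappings and reversibility -/

abbrev CMap := Const → Option GTerm

/-- Apply a constant mapping to a ground term, replacing constants in its domain. -/
def applyCM (g : CMap) : GTerm → GTerm
  | .const c => (g c).getD (GTerm.const c)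
  | .func ρ i y args => GTerm.func ρ i y (args.attach.map fun s => applyCM g s.1)
termination_by t => sizeOf t
decreasing_by
  have := List.sizeOf_lt_of_mem s.2
  simp only [GTerm.func.sizeOf_spec]
  omega

/-- `g` is reversible for the (subterm-closed) set of terms `𝒯`. -/
def Reversible (g : CMap) (𝒯 : Set GTerm) : Prop :=
  (∀ c : Const, GTerm.const c ∈ 𝒯 → (g c).isSome) ∧
  (∀ t ∈ 𝒯, ∀ s ∈ 𝒯, t ≠ s → applyCM g t ≠ applyCM g s) ∧
  (∀ c : Const, GTerm.const c ∈ 𝒯 →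
    ∀ s : GTerm, s.Subterm (applyCM g (GTerm.const c)) →
      ∀ u ∈ 𝒯, u.isFunctional → applyCM g u ≠ s)

def cmImg (g : CMap) (F : FactSet) : FactSet := (Atom.map (applyCM g)) '' F

/-! ### Cyclicity prefixes -/

/-- The rule-database `D_ρ = body(ρ)σ_uc`. -/
def ruleDB (ρ : Rule) : FactSet := { f | ∃ a ∈ ρ.body, f = a.map sigmaUC }

/-- A cyclicity prefix for `R`, `hc`, and `ρ ∈ R`. -/
structure CyclicityPrefix (R : Set Rule) (hc : Rule → ℕ) (ρ : Rule) where
  n : ℕ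
  npos : 0 < n
  trig : ℕ → Trigger
  g : CMap
  rtrig : ∀ i ≤ n, RTrigger R (trig i)
  first_rule : (trig 0).rule = ρ
  first_subst : (trig 0).subst = sigmaUC
  loaded : ∀ i ≤ n, (trig i).Loaded (chaseSeq (ruleDB ρ) hc trig i)
  uc_unbl : ∀ i, 1 ≤ i → i ≤ n → UcUnblockable R hc (trig i)
  g_unbl : GUnblockable R (ruleDB ρ) hc (trig 0)
  last_rule : (trig n).rule = ρ
  last_cyclic : ∃ t : GTerm, RuleCyclic ρ t ∧ t.OccursIn (outHC hc (trig n))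
  g_comp : applyCM g ∘ (trig 0).subst = (trig n).subst
  g_rev : ∀ i, 1 ≤ i → i ≤ n → ∀ j : ℕ,
    Reversible g (skel ⟨(trig i).rule, (applyCM g)^[j] ∘ (trig i).subst⟩)

/-- The infinite sequence `Λ^∞` obtained by unfolding a cyclicity prefix. -/
def prefixInf {R : Set Rule} {hc : Rule → ℕ} {ρ : Rule} (P : CyclicityPrefix R hc ρ) :
    ℕ → Trigger := fun k =>
  if k = 0 then P.trig 0
  else ⟨(P.trig ((k - 1) % P.n + 1)).rule,
        (applyCM P.g)^[(k - 1) / P.n] ∘ (P.trig ((k - 1) % P.n + 1)).subst⟩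

/-! ### RPC, RPC_s, DRPC -/

def RPCclosed (R : Set Rule) (hc : Rule → ℕ) (ρ : Rule) (F : FactSet) : Prop :=
  ruleDB ρ ⊆ F ∧ outHC hc ⟨ρ, sigmaUC⟩ ⊆ F ∧
  ∀ lam : Trigger, RTrigger R lam →
    (∀ x ∈ lam.rule.bodyVars, ¬ (lam.subst x).Cyclic) →
    lam.Loaded F → UcUnblockable R hc lam →
    (lam.rule = ρ → Set.InjOn lam.subst { x | x ∈ lam.rule.bodyVars }) →
    outHC hc lam ⊆ F

/-- `RPC(R, hc, ρ)`. -/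
def RPCset (R : Set Rule) (hc : Rule → ℕ) (ρ : Rule) : FactSet :=
  ⋂₀ { F | RPCclosed R hc ρ F }

/-- `R` is restricted prefix-cyclic. -/
def IsRPC (R : Set Rule) : Prop :=
  ∃ hc : Rule → ℕ, IsHeadChoice R hc ∧
    ∃ ρ ∈ R, ∃ t : GTerm, RuleCyclic ρ t ∧ t.OccursIn (RPCset R hc ρ)

/-- The head-choice `hc_i`. -/
def hcIdx (i : ℕ) : Rule → ℕ := fun ρ => if i ≤ ρ.branching then i else ρ.branching

/-- `branching(R)`: the least bound on the branching of the rules of `R`. -/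
def branchingR (R : Set Rule) : ℕ := sInf { b | ∀ ρ ∈ R, ρ.branching ≤ b }

/-- `R` is `RPC_s`. -/
def IsRPCs (R : Set Rule) : Prop :=
  ∃ i : ℕ, 1 ≤ i ∧ i ≤ branchingR R ∧
    ∃ ρ ∈ R, ∃ t : GTerm, RuleCyclic ρ t ∧ t.OccursIn (RPCset R (hcIdx i) ρ)

def DRPCclosed (R : Set Rule) (ρ : Rule) (F : FactSet) : Prop :=
  ruleDB ρ ⊆ F ∧ Trigger.out ⟨ρ, sigmaUC⟩ 0 ⊆ F ∧
  ∀ lam : Trigger, RTrigger R lam → lam.rule.Deterministic →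
    (∀ x ∈ lam.rule.bodyVars, ¬ (lam.subst x).Cyclic) →
    lam.Loaded F → StarUnblockable R lam →
    (lam.rule = ρ → Set.InjOn lam.subst { x | x ∈ lam.rule.bodyVars }) →
    lam.out 0 ⊆ F

/-- `DRPC(R, ρ)`. -/
def DRPCset (R : Set Rule) (ρ : Rule) : FactSet :=
  ⋂₀ { F | DRPCclosed R ρ F }

/-- `R` is deterministic restricted prefix-cyclic. -/
def IsDRPC (R : Set Rule) : Prop :=
  ∃ ρ ∈ R, ρ.Deterministic ∧ ∃ t : GTerm, RuleCyclic ρ t ∧ t.OccursIn (DRPCset R ρ)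


/-! ### Auxiliary lemmas for `prefixInf_growing` -/

section AuxGrowing

theorem aux_attach_map {α β : Type} (l : List α) (f : α → β) :
    (l.attach.map fun s => f s.1) = l.map f := by
  rw [show (fun s : {x // x ∈ l} => f s.1) = f ∘ Subtype.val from rfl, ← List.map_map,
    List.attach_map_subtype_val]

theorem aux_sub_trans {a b c : GTerm} (h1 : GTerm.Subterm a b) (h2 : GTerm.Subterm b c) :
    GTerm.Subterm a c := by
  induction h2 with
  | refl => exact h1
  | func ρ i y hm hs ih => exact GTerm.Subterm.func ρ i y hm ih

theorem aux_occ_mono {F G : FactSet} (h : F ⊆ G) {t : GTerm} (ht : t.OccursIn F) :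
    t.OccursIn G := by
  obtain ⟨a, ha, s, hs, hsub⟩ := ht
  exact ⟨a, h ha, s, hs, hsub⟩

theorem aux_occ_of_sub {t u : GTerm} (h : GTerm.Subterm t u) {F : FactSet}
    (hu : u.OccursIn F) : t.OccursIn F := by
  obtain ⟨a, ha, s, hs, hsub⟩ := hu
  exact ⟨a, ha, s, hs, aux_sub_trans h hsub⟩

theorem aux_applyCM_const (g : CMap) (c : Const) :
    applyCM g (GTerm.const c) = (g c).getD (GTerm.const c) := by
  rw [applyCM]

theorem aux_applyCM_func (g : CMap) (ρ : Rule) (i : ℕ) (y : Var) (l : List GTerm) :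
    applyCM g (GTerm.func ρ i y l) = GTerm.func ρ i y (l.map (applyCM g)) := by
  rw [applyCM, aux_attach_map]

theorem aux_depth_const (c : Const) : GTerm.depth (GTerm.const c) = 1 := by
  rw [GTerm.depth]

theorem aux_depth_func (ρ : Rule) (i : ℕ) (y : Var) (l : List GTerm) :
    GTerm.depth (GTerm.func ρ i y l) = 1 + (l.map GTerm.depth).foldr max 0 := by
  rw [GTerm.depth, aux_attach_map]

theorem aux_le_foldr_max {l : List ℕ} {a : ℕ} (h : a ∈ l) : a ≤ l.foldr max 0 := by
  induction l with
  | nil => cases h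
  | cons b l ih =>
    rcases List.mem_cons.1 h with rfl | h
    · exact le_max_left _ _
    · exact le_trans (ih h) (le_max_right _ _)

theorem aux_depth_le_of_sub {s t : GTerm} (h : GTerm.Subterm s t) : s.depth ≤ t.depth := by
  induction h with
  | refl => exact le_rfl
  | func ρ i y hm hs ih =>
    refine le_trans ih ?_
    rw [aux_depth_func]
    have := aux_le_foldr_max (List.mem_map_of_mem (f := GTerm.depth) hm)
    omega

theorem aux_sub_applyCM {g : CMap} {s t : GTerm} (h : GTerm.Subterm s t) :
    GTerm.Subterm (applyCM g s) (applyCM g t) := by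
  induction h with
  | refl => exact GTerm.Subterm.refl _
  | func ρ i y hm hs ih =>
    rw [aux_applyCM_func]
    exact GTerm.Subterm.func ρ i y (List.mem_map_of_mem (f := applyCM g) hm) ih

theorem aux_sub_iterate {g : CMap} {s t : GTerm} (j : ℕ) (h : GTerm.Subterm s t) :
    GTerm.Subterm ((applyCM g)^[j] s) ((applyCM g)^[j] t) := by
  induction j with
  | zero => simpa using h
  | succ j ih =>
    rw [Function.iterate_succ_apply', Function.iterate_succ_apply']
    exact aux_sub_applyCM ih

theorem aux_iterate_func (g : CMap) (j : ℕ) (ρ : Rule) (i : ℕ) (y : Var) (l : List GTerm) :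
    (applyCM g)^[j] (GTerm.func ρ i y l) = GTerm.func ρ i y (l.map ((applyCM g)^[j])) := by
  induction j generalizing l with
  | zero => simp
  | succ j ih =>
    rw [Function.iterate_succ_apply, aux_applyCM_func, ih, List.map_map, ← Function.iterate_succ]

theorem aux_const_sub_func {c : Const} {ρ : Rule} {i : ℕ} {y : Var} {l : List GTerm}
    (h : GTerm.Subterm (GTerm.const c) (GTerm.func ρ i y l)) :
    ∃ s ∈ l, GTerm.Subterm (GTerm.const c) s := by
  cases h with
  | func _ _ _ hm hs => exact ⟨_, hm, hs⟩

theorem aux_depth_iter_lt {g : CMap} {c : Const} {ρ : Rule} {i : ℕ} {y : Var} {l : List GTerm}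
    (h : applyCM g (GTerm.const c) = GTerm.func ρ i y l)
    (hsub : GTerm.Subterm (GTerm.const c) (applyCM g (GTerm.const c))) (j : ℕ) :
    GTerm.depth ((applyCM g)^[j] (GTerm.const c)) <
      GTerm.depth ((applyCM g)^[j + 1] (GTerm.const c)) := by
  rw [h] at hsub
  obtain ⟨s, hsmem, hsc⟩ := aux_const_sub_func hsub
  rw [Function.iterate_succ_apply, h, aux_iterate_func, aux_depth_func]
  have h1 : GTerm.depth ((applyCM g)^[j] (GTerm.const c)) ≤ GTerm.depth ((applyCM g)^[j] s) :=
    aux_depth_le_of_sub (aux_sub_iterate j hsc)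
  have h2 : GTerm.depth ((applyCM g)^[j] s) ≤
      ((l.map ((applyCM g)^[j])).map GTerm.depth).foldr max 0 :=
    aux_le_foldr_max (List.mem_map_of_mem (f := GTerm.depth) (List.mem_map_of_mem hsmem))
  omega

theorem aux_depth_iter_ge {g : CMap} {c : Const} {ρ : Rule} {i : ℕ} {y : Var} {l : List GTerm}
    (h : applyCM g (GTerm.const c) = GTerm.func ρ i y l)
    (hsub : GTerm.Subterm (GTerm.const c) (applyCM g (GTerm.const c))) (k : ℕ) :
    k + 1 ≤ GTerm.depth ((applyCM g)^[k] (GTerm.const c)) := by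
  induction k with
  | zero => simp [aux_depth_const]
  | succ k ih =>
    have := aux_depth_iter_lt h hsub k
    omega

theorem aux_mem_bodyVars {ρ : Rule} {z : Var} :
    z ∈ ρ.bodyVars ↔ ∃ a ∈ ρ.body, z ∈ a.args := by
  simp [Rule.bodyVars, List.mem_flatten]

theorem aux_mem_frontier_intro {ρ : Rule} {z : Var} {h : List (Atom Var)} {a : Atom Var}
    (hzb : z ∈ ρ.bodyVars) (hh : h ∈ ρ.heads) (ha : a ∈ h) (hz : z ∈ a.args) :
    z ∈ ρ.frontierList := by
  unfold Rule.frontierList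
  rw [List.mem_dedup, List.mem_filter]
  refine ⟨hzb, ?_⟩
  simp only [List.any_eq_true]
  exact ⟨h, hh, a, ha, by simpa using hz⟩

theorem aux_frontier_sub_body {ρ : Rule} {x : Var} (h : x ∈ ρ.frontierList) :
    x ∈ ρ.bodyVars := by
  unfold Rule.frontierList at h
  rw [List.mem_dedup, List.mem_filter] at h
  exact h.1

theorem aux_getD_head_mem {R : Set Rule} {hc : Rule → ℕ} {ρ : Rule} (hR : ρ ∈ R)
    (hhc : IsHeadChoice R hc) : ρ.heads.getD (hc ρ - 1) [] ∈ ρ.heads := by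
  have h := hhc ρ hR
  have hlt : hc ρ - 1 < ρ.heads.length := by
    have h2 := h.2; unfold Rule.branching at h2; have h1 := h.1
    have : 0 < ρ.heads.length := List.length_pos_iff.2 ρ.heads_ne
    omega
  rw [List.getD_eq_getElem _ _ hlt]
  exact List.getElem_mem hlt

theorem aux_subst_occurs_of_loaded {lam : Trigger} {F : FactSet} (hl : lam.Loaded F)
    {z : Var} (hz : z ∈ lam.rule.bodyVars) : (lam.subst z).OccursIn F := by
  obtain ⟨a, ha, hza⟩ := aux_mem_bodyVars.1 hz
  exact ⟨a.map lam.subst, hl a ha, lam.subst z, List.mem_map_of_mem hza,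
    GTerm.Subterm.refl _⟩

/-- An uc-unblockable non-datalog trigger maps, in each head disjunct, some frontier
variable to a non-constant (functional) term: otherwise it would be obsolete in the
over-approximation, which contains all facts over skeleton constants and `⋆`. -/
theorem aux_uc_head_func (R : Set Rule) (hc : Rule → ℕ) (lam : Trigger)
    (hR : lam.rule ∈ R)
    (hnobs : ¬ lam.Obsolete (Oset R hc lam (huc lam))) :
    ∀ h ∈ lam.rule.heads, ∃ a ∈ h, ∃ z ∈ a.args, z ∈ lam.rule.bodyVars ∧
      ∀ c : Const, lam.subst z ≠ GTerm.const c := by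
  intro h hh
  by_contra hcon
  push_neg at hcon
  apply hnobs
  refine ⟨h, hh,
    fun z => if z ∈ lam.rule.bodyVars then lam.subst z else GTerm.const Const.star,
    fun x hx => if_pos hx, ?_⟩
  intro a ha
  intro F hF
  apply hF.1
  refine ⟨⟨lam.rule, hR, Or.inr ⟨h, hh, a, ha, rfl⟩⟩, ?_⟩
  intro t ht
  obtain ⟨z, hz, rfl⟩ := List.mem_map.1 ht
  by_cases hzb : z ∈ lam.rule.bodyVars
  · obtain ⟨c, hcz⟩ := hcon a ha z hz hzb
    rw [if_pos hzb, hcz]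
    refine ⟨c, rfl, Or.inl ?_⟩
    exact ⟨GTerm.const c, Or.inr ⟨z, aux_mem_frontier_intro hzb hh ha hz, hcz, c, rfl⟩,
      GTerm.Subterm.refl _⟩
  · rw [if_neg hzb]
    exact ⟨Const.star, rfl, Or.inr rfl⟩

theorem aux_chaseSeq_mono {D : FactSet} {hc : Rule → ℕ} {Λ : ℕ → Trigger} {i j : ℕ}
    (h : i ≤ j) : chaseSeq D hc Λ i ⊆ chaseSeq D hc Λ j := by
  induction j with
  | zero => rw [Nat.le_zero.mp h]
  | succ j ih =>
    rcases Nat.lt_or_ge i (j + 1) with h' | h'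
    · exact (ih (by omega)).trans Set.subset_union_left
    · have : i = j + 1 := by omega
      subst this; exact subset_rfl

theorem aux_chase_bound (D : FactSet) (hD : ∀ a ∈ D, ∀ t ∈ a.args, ∃ c : Const, t = GTerm.const c)
    (hc : Rule → ℕ) (Λ : ℕ → Trigger) (i : ℕ) :
    ∃ B, ∀ t : GTerm, t.OccursIn (chaseSeq D hc Λ i) → t.depth ≤ B := by
  induction i with
  | zero =>
    refine ⟨1, ?_⟩
    rintro t ⟨a, ha, s, hs, hsub⟩
    obtain ⟨c, rfl⟩ := hD a ha s hs
    cases hsub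
    rw [aux_depth_const]
  | succ i ih =>
    obtain ⟨B, hB⟩ := ih
    refine ⟨max B ((((Λ i).rule.heads.getD (hc (Λ i).rule - 1) []).map fun a =>
      (a.args.map fun z =>
        (skolemSubst (Λ i).rule (hc (Λ i).rule - 1) (Λ i).subst z).depth).foldr max 0).foldr
          max 0), ?_⟩
    rintro t ⟨a, ha, s, hs, hsub⟩
    have ha' : a ∈ chaseSeq D hc Λ i ∨ a ∈ outHC hc (Λ i) := ha
    rcases ha' with ha' | ha'
    · exact le_trans (hB t ⟨a, ha', s, hs, hsub⟩) (le_max_left _ _)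
    · obtain ⟨a₀, ha₀, rfl⟩ := ha'
      obtain ⟨z, hz, rfl⟩ := List.mem_map.1 hs
      have h1 := aux_depth_le_of_sub hsub
      have h2 : (skolemSubst (Λ i).rule (hc (Λ i).rule - 1) (Λ i).subst z).depth ≤
          (a₀.args.map fun z =>
            (skolemSubst (Λ i).rule (hc (Λ i).rule - 1) (Λ i).subst z).depth).foldr max 0 :=
        aux_le_foldr_max (List.mem_map_of_mem hz)
      have h3 := aux_le_foldr_max (l := ((Λ i).rule.heads.getD (hc (Λ i).rule - 1) []).map
        fun a => (a.args.map fun z =>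
          (skolemSubst (Λ i).rule (hc (Λ i).rule - 1) (Λ i).subst z).depth).foldr max 0)
        (List.mem_map_of_mem ha₀)
      exact le_trans (le_trans h1 (le_trans h2 h3)) (le_max_right _ _)

theorem aux_occurs_in_out (hc : Rule → ℕ) (lam : Trigger) {a₀ : Atom Var} {y : Var}
    (ha₀ : a₀ ∈ lam.rule.heads.getD (hc lam.rule - 1) []) (hy : y ∈ a₀.args)
    (hyb : y ∉ lam.rule.bodyVars) {x : Var} (hx : x ∈ lam.rule.frontierList) :
    (lam.subst x).OccursIn (outHC hc lam) := by
  refine ⟨a₀.map (skolemSubst lam.rule (hc lam.rule - 1) lam.subst), ⟨a₀, ha₀, rfl⟩,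
    skolemSubst lam.rule (hc lam.rule - 1) lam.subst y, List.mem_map_of_mem hy, ?_⟩
  simp only [skolemSubst]
  rw [if_neg hyb]
  exact GTerm.Subterm.func _ _ _ (List.mem_map_of_mem hx) (GTerm.Subterm.refl _)

/-- Main invariant: every functional term occurring in the chase prefix is a fresh
skolem term over the frontier images of one of the triggers, and contains every
frontier constant of `ρ` as a subterm. -/
theorem aux_main_inv (R : Set Rule) (hc : Rule → ℕ) (ρ : Rule) (hρ : ρ ∈ R)
    (hhc : IsHeadChoice R hc) (P : CyclicityPrefix R hc ρ) :
    ∀ j, j ≤ P.n + 1 → ∀ u : GTerm, u.OccursIn (chaseSeq (ruleDB ρ) hc P.trig j) →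
      u.isFunctional →
      (∃ m, m ≤ P.n ∧ ∃ y, y ∉ (P.trig m).rule.bodyVars ∧
        (∃ a ∈ (P.trig m).rule.heads.getD (hc (P.trig m).rule - 1) [], y ∈ a.args) ∧
        u = GTerm.func (P.trig m).rule (hc (P.trig m).rule - 1) y
              ((P.trig m).rule.frontierList.map (P.trig m).subst)) ∧
      (∀ x ∈ ρ.frontierList, GTerm.Subterm (GTerm.const (Const.varConst x)) u) := by
  intro j
  induction j with
  | zero =>
    intro _ u hu hf
    obtain ⟨a, ha, s, hs, hsub⟩ := hu
    obtain ⟨b, hb, rfl⟩ := ha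
    obtain ⟨z, hz, rfl⟩ := List.mem_map.1 hs
    simp only [sigmaUC] at hsub
    cases hsub
    simp [GTerm.isFunctional] at hf
  | succ j ih =>
    intro hj u hu hf
    obtain ⟨a, ha, s, hs, hsub⟩ := hu
    have ha' : a ∈ chaseSeq (ruleDB ρ) hc P.trig j ∨ a ∈ outHC hc (P.trig j) := ha
    rcases ha' with ha' | ha'
    · exact ih (by omega) u ⟨a, ha', s, hs, hsub⟩ hf
    · obtain ⟨a₀, ha₀, rfl⟩ := ha'
      obtain ⟨z, hz, rfl⟩ := List.mem_map.1 hs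
      by_cases hzb : z ∈ (P.trig j).rule.bodyVars
      · have hsub' : GTerm.Subterm u ((P.trig j).subst z) := by
          simpa only [skolemSubst, if_pos hzb] using hsub
        exact ih (by omega) u
          (aux_occ_of_sub hsub' (aux_subst_occurs_of_loaded (P.loaded j (by omega)) hzb)) hf
      · have hsub' : GTerm.Subterm u (GTerm.func (P.trig j).rule (hc (P.trig j).rule - 1) z
            ((P.trig j).rule.frontierList.map (P.trig j).subst)) := by
          simpa only [skolemSubst, if_neg hzb] using hsub
        cases hsub' with
        | refl =>
          refine ⟨⟨j, by omega, z, hzb, ⟨a₀, ha₀, hz⟩, rfl⟩, ?_⟩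
          intro x hx
          rcases Nat.eq_zero_or_pos j with hj0 | hj1
          · subst hj0
            refine GTerm.Subterm.func _ _ _ ?_ (GTerm.Subterm.refl _)
            rw [P.first_rule, P.first_subst]
            exact List.mem_map.2 ⟨x, hx, rfl⟩
          · have hRj : (P.trig j).rule ∈ R := (P.rtrig j (by omega)).1
            have hnd : ¬ (P.trig j).rule.Datalog := fun hD =>
              hzb (hD.2 _ (aux_getD_head_mem hRj hhc) a₀ ha₀ z hz)
            have hnobs : ¬ (P.trig j).Obsolete
                (Oset R hc (P.trig j) (huc (P.trig j))) := by
              rcases P.uc_unbl j hj1 (by omega) with h | h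
              · exact absurd h hnd
              · exact h
            obtain ⟨a', ha', z', hz'arg, hz'b, hz'f⟩ :=
              aux_uc_head_func R hc (P.trig j) hRj hnobs
                ((P.trig j).rule.heads.head (P.trig j).rule.heads_ne)
                (List.head_mem (P.trig j).rule.heads_ne)
            have hocc : ((P.trig j).subst z').OccursIn (chaseSeq (ruleDB ρ) hc P.trig j) :=
              aux_subst_occurs_of_loaded (P.loaded j (by omega)) hz'b
            have hfz : ((P.trig j).subst z').isFunctional := by
              cases hv : (P.trig j).subst z' with
              | const c => exact absurd hv (hz'f c)
              | func _ _ _ _ => trivial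
            have hsx := (ih (by omega) _ hocc hfz).2 x hx
            exact GTerm.Subterm.func _ _ _
              (List.mem_map_of_mem
                (aux_mem_frontier_intro hz'b (List.head_mem _) ha' hz'arg)) hsx
        | func _ _ _ hmem hsub'' =>
          obtain ⟨x', hx', rfl⟩ := List.mem_map.1 hmem
          have hocc : ((P.trig j).subst x').OccursIn (chaseSeq (ruleDB ρ) hc P.trig j) :=
            aux_subst_occurs_of_loaded (P.loaded j (by omega)) (aux_frontier_sub_body hx')
          exact ih (by omega) u (aux_occ_of_sub hsub'' hocc) hf

end AuxGrowing

/-- `Λ^∞` is growing for `⟨R, D_ρ⟩` and `hc`: there is a frontier variable `x` of `ρ`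
with `σ_0(x)` a constant `c` such that `g_Λ(c)` is a functional term having `c` as a
subterm, the depths of the iterates `g_Λ^k(c)` strictly increase, and every `g_Λ^k(c)`
occurs in some `F_j`; hence `Λ^∞` is growing. -/
theorem prefixInf_growing (R : Set Rule) (hc : Rule → ℕ) (ρ : Rule) (hρ : ρ ∈ R)
    (hhc : IsHeadChoice R hc) (P : CyclicityPrefix R hc ρ) :
    (∃ x ∈ ρ.frontierList, ∃ c : Const,
      (P.trig 0).subst x = GTerm.const c ∧
      (applyCM P.g (GTerm.const c)).isFunctional ∧
      GTerm.Subterm (GTerm.const c) (applyCM P.g (GTerm.const c)) ∧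
      (∀ k : ℕ, 1 ≤ k →
        GTerm.depth ((applyCM P.g)^[k - 1] (GTerm.const c)) <
          GTerm.depth ((applyCM P.g)^[k] (GTerm.const c))) ∧
      ∀ k : ℕ, ∃ j : ℕ,
        ((applyCM P.g)^[k] (GTerm.const c)).OccursIn
          (chaseSeq (ruleDB ρ) hc (prefixInf P) j)) ∧
    SeqGrowing (ruleDB ρ) hc (prefixInf P) := by
  classical
  obtain ⟨t, htc, htocc⟩ := P.last_cyclic
  obtain ⟨i0, y0, args0, rfl, -⟩ := htc
  have htF : (GTerm.func ρ i0 y0 args0).OccursIn (chaseSeq (ruleDB ρ) hc P.trig (P.n + 1)) :=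
    aux_occ_mono (fun f hf => Or.inr hf) htocc
  obtain ⟨⟨m, hm, y', hy'b, ⟨a₀, ha₀m, hy₀⟩, hequ⟩, -⟩ :=
    aux_main_inv R hc ρ hρ hhc P (P.n + 1) le_rfl _ htF trivial
  injection hequ with h1 h2 h3 h4
  subst h3
  rw [← h1] at hy'b ha₀m
  have hnd : ¬ ρ.Datalog := fun hD =>
    hy'b (hD.2 _ (aux_getD_head_mem hρ hhc) a₀ ha₀m y0 hy₀)
  have hRn : (P.trig P.n).rule ∈ R := (P.rtrig P.n le_rfl).1
  have hnobs : ¬ (P.trig P.n).Obsolete (Oset R hc (P.trig P.n) (huc (P.trig P.n))) := by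
    rcases P.uc_unbl P.n P.npos le_rfl with h | h
    · rw [P.last_rule] at h; exact absurd h hnd
    · exact h
  obtain ⟨a', ha', z, hzarg, hzb, hzf⟩ :=
    aux_uc_head_func R hc (P.trig P.n) hRn hnobs _ (List.head_mem (P.trig P.n).rule.heads_ne)
  have hzfr : z ∈ (P.trig P.n).rule.frontierList :=
    aux_mem_frontier_intro hzb (List.head_mem _) ha' hzarg
  have hzfrρ : z ∈ ρ.frontierList := by rw [P.last_rule] at hzfr; exact hzfr
  have hzbρ : z ∈ ρ.bodyVars := by rw [P.last_rule] at hzb; exact hzb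
  have hσz : (P.trig P.n).subst z = applyCM P.g (GTerm.const (Const.varConst z)) := by
    have h := congrFun P.g_comp z
    rw [P.first_subst] at h
    exact h.symm
  obtain ⟨ρu, iu, yu, lu, hu⟩ : ∃ ρu iu yu lu,
      applyCM P.g (GTerm.const (Const.varConst z)) = GTerm.func ρu iu yu lu := by
    cases hv : applyCM P.g (GTerm.const (Const.varConst z)) with
    | const c' => exact absurd (hσz.trans hv) (hzf c')
    | func aa bb cc dd => exact ⟨aa, bb, cc, dd, rfl⟩
  have hoccn : ((P.trig P.n).subst z).OccursIn (chaseSeq (ruleDB ρ) hc P.trig P.n) :=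
    aux_subst_occurs_of_loaded (P.loaded P.n le_rfl) hzb
  have hfn : ((P.trig P.n).subst z).isFunctional := by rw [hσz, hu]; trivial
  have hsubcc : GTerm.Subterm (GTerm.const (Const.varConst z))
      (applyCM P.g (GTerm.const (Const.varConst z))) := by
    have h := (aux_main_inv R hc ρ hρ hhc P P.n (by omega) _ hoccn hfn).2 z hzfrρ
    rw [hσz] at h
    exact h
  have hoccall : ∀ k : ℕ, ∃ j : ℕ,
      ((applyCM P.g)^[k] (GTerm.const (Const.varConst z))).OccursIn
        (chaseSeq (ruleDB ρ) hc (prefixInf P) j) := by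
    intro k
    cases k with
    | zero =>
      refine ⟨0, ?_⟩
      obtain ⟨b, hb, hzba⟩ := aux_mem_bodyVars.1 hzbρ
      exact ⟨b.map sigmaUC, ⟨b, hb, rfl⟩, sigmaUC z, List.mem_map_of_mem hzba,
        by simpa [sigmaUC] using GTerm.Subterm.refl (GTerm.const (Const.varConst z))⟩
    | succ k' =>
      refine ⟨(k' + 1) * P.n + 1, ?_⟩
      have hk0 : (k' + 1) * P.n ≠ 0 := Nat.mul_ne_zero (by omega) (by have := P.npos; omega)
      have hmul : (k' + 1) * P.n = k' * P.n + P.n := by ring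
      have hidx : ((k' + 1) * P.n - 1) % P.n + 1 = P.n := by
        have h1 : (k' + 1) * P.n - 1 = (P.n - 1) + k' * P.n := by
          have := P.npos; omega
        rw [h1, Nat.add_mul_mod_self_right, Nat.mod_eq_of_lt (by have := P.npos; omega)]
        have := P.npos; omega
      have hdiv : ((k' + 1) * P.n - 1) / P.n = k' := by
        have h1 : (k' + 1) * P.n - 1 = (P.n - 1) + k' * P.n := by
          have := P.npos; omega
        rw [h1, Nat.add_mul_div_right _ _ P.npos,
          Nat.div_eq_of_lt (by have := P.npos; omega)]
        omega
      have hlam : prefixInf P ((k' + 1) * P.n) =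
          ⟨ρ, (applyCM P.g)^[k'] ∘ (P.trig P.n).subst⟩ := by
        simp only [prefixInf, if_neg hk0, hidx, hdiv, P.last_rule]
      have heq : ((applyCM P.g)^[k' + 1] (GTerm.const (Const.varConst z))) =
          (prefixInf P ((k' + 1) * P.n)).subst z := by
        rw [hlam]
        show _ = (applyCM P.g)^[k'] ((P.trig P.n).subst z)
        rw [hσz, Function.iterate_succ_apply]
      rw [heq]
      refine aux_occ_mono (fun f hf => Or.inr hf)
        (aux_occurs_in_out hc (prefixInf P ((k' + 1) * P.n)) (a₀ := a₀) (y := y0)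
          ?_ hy₀ ?_ ?_)
      · rw [hlam]; exact ha₀m
      · rw [hlam]; exact hy'b
      · rw [hlam]; exact hzfrρ
  refine ⟨⟨z, hzfrρ, Const.varConst z, by rw [P.first_subst]; rfl, by rw [hu]; trivial,
    hsubcc, ?_, hoccall⟩, ?_⟩
  · intro k hk
    have h := aux_depth_iter_lt hu hsubcc (k - 1)
    have hkk : k - 1 + 1 = k := by omega
    rw [hkk] at h
    exact h
  · intro i
    have hDff : ∀ a ∈ ruleDB ρ, ∀ t ∈ a.args, ∃ cc : Const, t = GTerm.const cc := by
      rintro a ⟨b, hb, rfl⟩ t ht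
      obtain ⟨zz, hzz, rfl⟩ := List.mem_map.1 ht
      exact ⟨Const.varConst zz, rfl⟩
    obtain ⟨B, hB⟩ := aux_chase_bound (ruleDB ρ) hDff hc (prefixInf P) i
    obtain ⟨j0, hj0⟩ := hoccall B
    refine ⟨max j0 (i + 1),
      lt_of_lt_of_le (Nat.lt_succ_self i) (le_max_right _ _),
      (applyCM P.g)^[B] (GTerm.const (Const.varConst z)),
      aux_occ_mono (aux_chaseSeq_mono (le_max_left _ _)) hj0, ?_⟩
    intro hcon
    have h1 := hB _ hcon
    have h2 := aux_depth_iter_ge hu hsubcc B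
    omega

end
end DisjChase
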